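/- Suppose p̃ ∈ [0,1] and p_real, p_hyb ∈ [0,1] satisfy |p_real − p̃| ≤ t + ν and |p_hyb − p̃| ≤ t + ν, and suppose normalized states |ψ₀⟩, |ψ₁⟩ satisfy |⟨ψ₀|ψ₁⟩| ≥ 1 − 2t^{2/3} − ν for some ν ≥ 0 and t ∈ (0,1). Define σ_b := p_b |ψ_b⟩⟨ψ_b| + (1−p_b)|⊥⟩⟨⊥| for a fixed unit vector |⊥⟩ orthogonal to both |ψ₀⟩, |ψ₁⟩, with p₀ = p_real and p₁ = p_hyb. Then TD(σ₀, σ₁) ≤ 2t + 2t^{1/3} + O(√ν). In particular, if t = δ³/64 then TD(σ₀, σ₁) ≤ δ + O(√ν). -/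

import Mathlib

open scoped Matrix ComplexOrder

/-- The trace norm (sum of singular values) of a complex square matrix. -/
noncomputable def traceNorm {n : Type*} [Fintype n] [DecidableEq n]
    (A : Matrix n n ℂ) : ℝ :=
  (((Matrix.posSemidef_conjTranspose_mul_self A).1.eigenvectorUnitary.1 *
      Matrix.diagonal (((↑) : ℝ → ℂ) ∘ (√·) ∘ (Matrix.posSemidef_conjTranspose_mul_self A).1.eigenvalues) *
      (star (Matrix.posSemidef_conjTranspose_mul_self A).1.eigenvectorUnitary : Matrix n n ℂ)).trace).re

/-- Trace distance `TD(ρ,σ) = (1/2)·Tr|ρ−σ|`. -/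
noncomputable def traceDist {n : Type*} [Fintype n] [DecidableEq n]
    (A B : Matrix n n ℂ) : ℝ :=
  traceNorm (A - B) / 2

/-- Outer product `|ψ⟩⟨ψ|`. -/
noncomputable def outer {n : Type*} [Fintype n] (ψ : n → ℂ) : Matrix n n ℂ :=
  Matrix.vecMulVec ψ (star ψ)

set_option linter.unusedSectionVars false
set_option linter.unusedVariables false
set_option maxHeartbeats 1000000

namespace Stmt11Aux

variable {n : Type*} [Fintype n] [DecidableEq n]

lemma outer_posSemidef (ψ : n → ℂ) : (outer ψ).PosSemidef := by
  exact Matrix.posSemidef_vecMulVec_self_star ψ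

lemma psd_real_smul {c : ℝ} (hc : 0 ≤ c) {M : Matrix n n ℂ} (hM : M.PosSemidef) :
    ((c : ℂ) • M).PosSemidef := by
  exact hM.smul (Complex.zero_le_real.mpr hc)

lemma psd_diag_nonneg {M : Matrix n n ℂ} (hM : M.PosSemidef) (i : n) : 0 ≤ M i i := by
  exact hM.diag_nonneg

lemma traceNorm_le_of_decomp {A P Q : Matrix n n ℂ}
    (hP : P.PosSemidef) (hQ : Q.PosSemidef) (h : A = P - Q) :
    traceNorm A ≤ P.trace.re + Q.trace.re := by
  have hA : A.IsHermitian := h ▸ hP.1.sub hQ.1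
  set U : Matrix n n ℂ := (hA.eigenvectorUnitary : Matrix n n ℂ) with hUdef
  have hU1 : star U * U = 1 := Matrix.UnitaryGroup.star_mul_self _
  have hU2 : U * star U = 1 := by
    exact Matrix.mem_unitaryGroup_iff.mp hA.eigenvectorUnitary.2
  set lam : n → ℝ := hA.eigenvalues with hlam
  set S : Matrix n n ℂ := U * Matrix.diagonal (fun i => ((|lam i| : ℝ) : ℂ)) * star U with hSdef
  have hSpsd : S.PosSemidef := by
    have hd : (Matrix.diagonal (fun i => ((|lam i| : ℝ) : ℂ))).PosSemidef := by
      rw [Matrix.posSemidef_diagonal_iff]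
      intro i
      exact_mod_cast abs_nonneg (lam i)
    rw [hSdef]
    simpa [Matrix.star_eq_conjTranspose] using hd.mul_mul_conjTranspose_same U
  have hspec : A = U * Matrix.diagonal (fun i => ((lam i : ℝ) : ℂ)) * star U :=
    hA.spectral_theorem
  have key : ∀ d : n → ℂ, (U * Matrix.diagonal d * star U) * (U * Matrix.diagonal d * star U)
      = U * (Matrix.diagonal (fun i => d i * d i) * star U) := by
    intro d
    simp only [Matrix.mul_assoc]
    rw [← Matrix.mul_assoc (star U) U, hU1, Matrix.one_mul,
      ← Matrix.mul_assoc (Matrix.diagonal d), Matrix.diagonal_mul_diagonal]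
  have hsq : S ^ 2 = Aᴴ * A := by
    have hAH : Aᴴ = A := hA
    have habs : (fun i => ((|lam i| : ℝ) : ℂ) * ((|lam i| : ℝ) : ℂ))
        = fun i => ((lam i : ℝ) : ℂ) * ((lam i : ℝ) : ℂ) := by
      funext i
      rw [← Complex.ofReal_mul, ← Complex.ofReal_mul, abs_mul_abs_self]
    rw [hAH, pow_two, hSdef, key, habs]
    conv_rhs => rw [hspec, key]
  have hcp : (Aᴴ * A).charpoly
      = ∏ i, (Polynomial.X - Polynomial.C ((((lam i)^2 : ℝ)) : ℂ)) := by
    rw [← hsq, pow_two, hSdef, key, Matrix.charpoly_mul_comm, Matrix.mul_assoc, hU1,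
      Matrix.mul_one, Matrix.charpoly_diagonal]
    refine Finset.prod_congr rfl fun i _ => ?_
    rw [← Complex.ofReal_mul, abs_mul_abs_self, sq]
  have hroots : Multiset.map (fun i =>
      (((Matrix.posSemidef_conjTranspose_mul_self A).1.eigenvalues i : ℝ) : ℂ)) Finset.univ.val
      = Multiset.map (fun i => ((((lam i)^2 : ℝ)) : ℂ)) Finset.univ.val := by
    have h1 := (Matrix.posSemidef_conjTranspose_mul_self A).1.roots_charpoly_eq_eigenvalues
    rw [hcp, Polynomial.roots_prod _ _ (Finset.prod_ne_zero_iff.mpr fun i _ =>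
      Polynomial.X_sub_C_ne_zero _)] at h1
    simp only [Polynomial.roots_X_sub_C, Multiset.bind_singleton] at h1
    exact h1.symm
  have hmap : Multiset.map (Matrix.posSemidef_conjTranspose_mul_self A).1.eigenvalues
      Finset.univ.val = Multiset.map (fun i => (lam i)^2) Finset.univ.val := by
    apply Multiset.map_injective Complex.ofReal_injective
    simpa [Multiset.map_map, Function.comp_def] using hroots
  have htrS : traceNorm A = ∑ i, |lam i| := by
    rw [traceNorm, Matrix.trace_mul_comm, ← Matrix.mul_assoc,
      Matrix.UnitaryGroup.star_mul_self, Matrix.one_mul, Matrix.trace_diagonal]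
    simp only [Function.comp_apply, ← Complex.ofReal_sum, Complex.ofReal_re]
    calc ∑ i, √((Matrix.posSemidef_conjTranspose_mul_self A).1.eigenvalues i)
        = (Multiset.map (√·) (Multiset.map
            (Matrix.posSemidef_conjTranspose_mul_self A).1.eigenvalues Finset.univ.val)).sum := by
          rw [Multiset.map_map]; rfl
      _ = ∑ i, |lam i| := by
          rw [hmap, Multiset.map_map, Finset.sum_eq_multiset_sum]
          congr 1
          apply Multiset.map_congr rfl
          intro i _
          exact Real.sqrt_sq_eq_abs _
  rw [htrS]
  have h0 : star U * A * U = Matrix.diagonal (fun i => ((lam i : ℝ) : ℂ)) := by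
    calc star U * A * U = (star U * U) * Matrix.diagonal (fun i => ((lam i : ℝ) : ℂ))
          * (star U * U) := by rw [hspec]; simp only [Matrix.mul_assoc]
      _ = _ := by rw [hU1, Matrix.one_mul, Matrix.mul_one]
  have hdiag : Matrix.diagonal (fun i => ((lam i : ℝ) : ℂ))
      = star U * P * U - star U * Q * U := by
    rw [← h0, h, Matrix.mul_sub, Matrix.sub_mul]
  have hP' : (star U * P * U).PosSemidef := by
    simpa [Matrix.star_eq_conjTranspose] using hP.conjTranspose_mul_mul_same U
  have hQ' : (star U * Q * U).PosSemidef := by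
    simpa [Matrix.star_eq_conjTranspose] using hQ.conjTranspose_mul_mul_same U
  have hbound : ∀ i, |lam i| ≤ ((star U * P * U) i i).re + ((star U * Q * U) i i).re := by
    intro i
    have h1 : 0 ≤ ((star U * P * U) i i).re := (Complex.le_def.mp (psd_diag_nonneg hP' i)).1
    have h2 : 0 ≤ ((star U * Q * U) i i).re := (Complex.le_def.mp (psd_diag_nonneg hQ' i)).1
    have h3 : ((lam i : ℝ) : ℂ) = (star U * P * U) i i - (star U * Q * U) i i := by
      have := congrFun (congrFun hdiag i) i
      simpa [Matrix.diagonal_apply_eq] using this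
    have h4 : lam i = ((star U * P * U) i i).re - ((star U * Q * U) i i).re := by
      have := congrArg Complex.re h3
      simpa using this
    rw [h4]
    rw [abs_sub_comm]
    calc |((star U * Q * U) i i).re - ((star U * P * U) i i).re| ≤ _ := abs_sub _ _
      _ ≤ _ := by rw [abs_of_nonneg h1, abs_of_nonneg h2]; linarith
  calc ∑ i, |lam i| ≤ ∑ i, (((star U * P * U) i i).re + ((star U * Q * U) i i).re) :=
        Finset.sum_le_sum fun i _ => hbound i
    _ = (star U * P * U).trace.re + (star U * Q * U).trace.re := by
        rw [Finset.sum_add_distrib]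
        simp [Matrix.trace, Matrix.diag, Complex.re_sum]
    _ = P.trace.re + Q.trace.re := by
        rw [Matrix.trace_mul_cycle, hU2, Matrix.one_mul,
          Matrix.trace_mul_cycle (star U) Q U, hU2, Matrix.one_mul]

lemma trace_outer (ψ : n → ℂ) : (outer ψ).trace = star ψ ⬝ᵥ ψ := by
  simp [outer, Matrix.trace, Matrix.diag, Matrix.vecMulVec_apply, dotProduct, mul_comm]

lemma core (u v b : n → ℂ)
    (hu : star u ⬝ᵥ u = 1) (hv : star v ⬝ᵥ v = 1) (hb : star b ⬝ᵥ b = 1)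
    (F x p0 p1 pt : ℝ) (huv : star u ⬝ᵥ v = (F : ℂ))
    (hx : 0 < x) (hFx : 1 - F ≤ x)
    (hp0 : p0 ∈ Set.Icc (0:ℝ) 1) (hp1 : p1 ∈ Set.Icc (0:ℝ) 1)
    (hpt : pt ∈ Set.Icc (0:ℝ) 1) :
    traceDist ((p0 : ℂ) • outer u + (((1 - p0 : ℝ)) : ℂ) • outer b)
               ((p1 : ℂ) • outer v + (((1 - p1 : ℝ)) : ℂ) • outer b)
      ≤ (|p0 - pt| + |p1 - pt| + |p1 - p0|) / 2 + Real.sqrt (2 * x) := by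
  have hvu : star v ⬝ᵥ u = (F : ℂ) := by
    rw [Matrix.star_dotProduct, huv]
    exact Complex.conj_ofReal F
  set m : ℝ := Real.sqrt (2 * x) with hmdef
  have hm : 0 < m := Real.sqrt_pos.mpr (by linarith)
  have hm2 : m ^ 2 = 2 * x := Real.sq_sqrt (by linarith)
  set s : ℝ := Real.sqrt m with hsdef
  have hspos : 0 < s := Real.sqrt_pos.mpr hm
  have hs2 : s ^ 2 = m := Real.sq_sqrt hm.le
  have hsne : (s : ℂ) ≠ 0 := by exact_mod_cast hspos.ne'
  obtain ⟨A1, A2, hA1, hA2, hAe, hAa⟩ :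
      ∃ A1 A2 : ℝ, 0 ≤ A1 ∧ 0 ≤ A2 ∧ A1 - A2 = p0 - pt ∧ A1 + A2 = |p0 - pt| :=
    ⟨max (p0 - pt) 0, max (-(p0 - pt)) 0, le_max_right _ _, le_max_right _ _,
      max_zero_sub_max_neg_zero_eq_self _, max_zero_add_max_neg_zero_eq_abs_self _⟩
  obtain ⟨B1, B2, hB1, hB2, hBe, hBa⟩ :
      ∃ B1 B2 : ℝ, 0 ≤ B1 ∧ 0 ≤ B2 ∧ B1 - B2 = pt - p1 ∧ B1 + B2 = |pt - p1| :=
    ⟨max (pt - p1) 0, max (-(pt - p1)) 0, le_max_right _ _, le_max_right _ _,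
      max_zero_sub_max_neg_zero_eq_self _, max_zero_add_max_neg_zero_eq_abs_self _⟩
  obtain ⟨C1, C2, hC1, hC2, hCe, hCa⟩ :
      ∃ C1 C2 : ℝ, 0 ≤ C1 ∧ 0 ≤ C2 ∧ C1 - C2 = p1 - p0 ∧ C1 + C2 = |p1 - p0| :=
    ⟨max (p1 - p0) 0, max (-(p1 - p0)) 0, le_max_right _ _, le_max_right _ _,
      max_zero_sub_max_neg_zero_eq_self _, max_zero_add_max_neg_zero_eq_abs_self _⟩
  set y₁ : n → ℂ := (s : ℂ) • u + ((s⁻¹ : ℝ) : ℂ) • (u - v) with hy₁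
  set y₂ : n → ℂ := (s : ℂ) • u - ((s⁻¹ : ℝ) : ℂ) • (u - v) with hy₂
  set z₁ : n → ℂ := ((s⁻¹ : ℝ) : ℂ) • (u - v) + (s : ℂ) • v with hz₁
  set z₂ : n → ℂ := ((s⁻¹ : ℝ) : ℂ) • (u - v) - (s : ℂ) • v with hz₂
  set P : Matrix n n ℂ := (A1 : ℂ) • outer u + (B1 : ℂ) • outer v + (C1 : ℂ) • outer b
      + ((pt/4 : ℝ) : ℂ) • outer y₁ + ((pt/4 : ℝ) : ℂ) • outer z₁ with hPdef
  set Q : Matrix n n ℂ := (A2 : ℂ) • outer u + (B2 : ℂ) • outer v + (C2 : ℂ) • outer b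
      + ((pt/4 : ℝ) : ℂ) • outer y₂ + ((pt/4 : ℝ) : ℂ) • outer z₂ with hQdef
  have hpt4 : (0:ℝ) ≤ pt / 4 := by have := hpt.1; linarith
  have hPpsd : P.PosSemidef := by
    exact ((((psd_real_smul hA1 (outer_posSemidef u)).add
      (psd_real_smul hB1 (outer_posSemidef v))).add
      (psd_real_smul hC1 (outer_posSemidef b))).add
      (psd_real_smul hpt4 (outer_posSemidef y₁))).add
      (psd_real_smul hpt4 (outer_posSemidef z₁))
  have hQpsd : Q.PosSemidef := by
    exact ((((psd_real_smul hA2 (outer_posSemidef u)).add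
      (psd_real_smul hB2 (outer_posSemidef v))).add
      (psd_real_smul hC2 (outer_posSemidef b))).add
      (psd_real_smul hpt4 (outer_posSemidef y₂))).add
      (psd_real_smul hpt4 (outer_posSemidef z₂))
  have hA1' : A1 = A2 + (p0 - pt) := by linarith
  have hB1' : B1 = B2 + (pt - p1) := by linarith
  have hC1' : C1 = C2 + (p1 - p0) := by linarith
  have hPQ : ((p0 : ℂ) • outer u + (((1 - p0 : ℝ)) : ℂ) • outer b)
      - ((p1 : ℂ) • outer v + (((1 - p1 : ℝ)) : ℂ) • outer b) = P - Q := by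
    subst hA1' hB1' hC1'
    ext i j
    simp only [hPdef, hQdef, hy₁, hy₂, hz₁, hz₂, outer, Matrix.add_apply, Matrix.sub_apply,
      Matrix.smul_apply, Matrix.vecMulVec_apply, Pi.add_apply, Pi.sub_apply, Pi.smul_apply,
      Pi.star_apply, smul_eq_mul, Complex.star_def, map_add, map_sub, map_mul,
      Complex.conj_ofReal]
    push_cast
    field_simp
    ring
  have haa : star (u - v) ⬝ᵥ (u - v) = ((2 - 2*F : ℝ) : ℂ) := by
    simp only [star_sub, sub_dotProduct, dotProduct_sub, hu, hv, huv, hvu]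
    push_cast
    ring
  have hFle : 2 - 2*F ≥ 0 := by
    have h0 := dotProduct_star_self_nonneg (u - v)
    rw [haa] at h0
    have := Complex.zero_le_real.mp h0
    linarith
  have htr : P.trace + Q.trace
      = ((A1 + A2 + B1 + B2 + C1 + C2
          + pt * (s^2 + (s⁻¹)^2 * (2 - 2*F)) : ℝ) : ℂ) := by
    simp only [hPdef, hQdef, Matrix.trace_add, Matrix.trace_smul, trace_outer, smul_eq_mul,
      hy₁, hy₂, hz₁, hz₂, star_add, star_sub, star_smul, add_dotProduct,
      sub_dotProduct, smul_dotProduct, dotProduct_add,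
      dotProduct_sub, dotProduct_smul, hu, hv, hb, huv, hvu,
      Complex.star_def, map_add, map_sub, map_mul, Complex.conj_ofReal, smul_eq_mul]
    push_cast
    ring
  have hTDle : traceDist ((p0 : ℂ) • outer u + (((1 - p0 : ℝ)) : ℂ) • outer b)
      ((p1 : ℂ) • outer v + (((1 - p1 : ℝ)) : ℂ) • outer b)
      ≤ (P.trace.re + Q.trace.re) / 2 := by
    rw [traceDist]
    have := traceNorm_le_of_decomp hPpsd hQpsd hPQ
    linarith
  have htrre : P.trace.re + Q.trace.re
      = A1 + A2 + B1 + B2 + C1 + C2 + pt * (s^2 + (s⁻¹)^2 * (2 - 2*F)) := by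
    rw [← Complex.add_re, htr, Complex.ofReal_re]
  have hinner : pt * (s^2 + (s⁻¹)^2 * (2 - 2*F)) ≤ 2 * m := by
    have hsinv : (s⁻¹)^2 = m⁻¹ := by
      rw [← hs2]
      field_simp
    have h1 : (s⁻¹)^2 * (2 - 2*F) ≤ m := by
      rw [hsinv]
      have h2 : 2 - 2*F ≤ 2*x := by linarith
      calc m⁻¹ * (2 - 2*F) ≤ m⁻¹ * (2*x) := by
            apply mul_le_mul_of_nonneg_left h2 (by positivity)
        _ = m⁻¹ * m^2 := by rw [hm2]
        _ = m := by field_simp [pow_two]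
    have hs2m : s^2 = m := hs2
    have hnn : 0 ≤ s^2 + (s⁻¹)^2 * (2 - 2*F) := by positivity
    calc pt * (s^2 + (s⁻¹)^2 * (2 - 2*F)) ≤ 1 * (s^2 + (s⁻¹)^2 * (2 - 2*F)) :=
          mul_le_mul_of_nonneg_right hpt.2 hnn
      _ = s^2 + (s⁻¹)^2 * (2 - 2*F) := one_mul _
      _ ≤ m + m := by rw [hs2m]; linarith
      _ = 2 * m := by ring
  calc traceDist _ _ ≤ (P.trace.re + Q.trace.re) / 2 := hTDle
    _ = (A1 + A2 + B1 + B2 + C1 + C2 + pt * (s^2 + (s⁻¹)^2 * (2 - 2*F))) / 2 := by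
        rw [htrre]
    _ ≤ (|p0 - pt| + |p1 - pt| + |p1 - p0|) / 2 + m := by
        rw [← hAa, abs_sub_comm p1 pt, ← hBa, ← hCa]
        linarith

lemma sqrt_add_le' {a c : ℝ} (ha : 0 ≤ a) (hc : 0 ≤ c) :
    Real.sqrt (a + c) ≤ Real.sqrt a + Real.sqrt c := by
  have h : a + c ≤ (Real.sqrt a + Real.sqrt c)^2 := by
    nlinarith [Real.sq_sqrt ha, Real.sq_sqrt hc, Real.sqrt_nonneg a, Real.sqrt_nonneg c]
  calc Real.sqrt (a + c) ≤ Real.sqrt ((Real.sqrt a + Real.sqrt c)^2) := Real.sqrt_le_sqrt h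
    _ = Real.sqrt a + Real.sqrt c := Real.sqrt_sq (by positivity)

end Stmt11Aux
/-- Combining the component bounds of the extraction lemma: there is a universal
constant `C` such that whenever `|p_real − p̃| ≤ t+ν`, `|p_hyb − p̃| ≤ t+ν` and
`|⟨ψ₀|ψ₁⟩| ≥ 1 − 2t^{2/3} − ν`, the mixtures
`σ_b = p_b|ψ_b⟩⟨ψ_b| + (1−p_b)|⊥⟩⟨⊥|` satisfy
`TD(σ₀,σ₁) ≤ 2t + 2t^{1/3} + C√ν`; in particular for `t = δ³/64`,
`TD(σ₀,σ₁) ≤ δ + C√ν`. -/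
theorem stmt11 :
    ∃ C : ℝ, 0 < C ∧
      ∀ (n : ℕ) (ψ₀ ψ₁ bot : Fin n → ℂ) (t ν δ pt preal phyb : ℝ),
        star ψ₀ ⬝ᵥ ψ₀ = 1 → star ψ₁ ⬝ᵥ ψ₁ = 1 → star bot ⬝ᵥ bot = 1 →
        star ψ₀ ⬝ᵥ bot = 0 → star ψ₁ ⬝ᵥ bot = 0 →
        0 < t → t < 1 → 0 ≤ ν →
        pt ∈ Set.Icc (0:ℝ) 1 → preal ∈ Set.Icc (0:ℝ) 1 → phyb ∈ Set.Icc (0:ℝ) 1 →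
        |preal - pt| ≤ t + ν → |phyb - pt| ≤ t + ν →
        1 - 2 * t ^ ((2:ℝ)/3) - ν ≤ ‖star ψ₀ ⬝ᵥ ψ₁‖ →
        (traceDist ((preal : ℂ) • outer ψ₀ + (((1 - preal : ℝ)) : ℂ) • outer bot)
                   ((phyb : ℂ) • outer ψ₁ + (((1 - phyb : ℝ)) : ℂ) • outer bot)
            ≤ 2 * t + 2 * t ^ ((1:ℝ)/3) + C * Real.sqrt ν) ∧
        (t = δ ^ 3 / 64 →
          traceDist ((preal : ℂ) • outer ψ₀ + (((1 - preal : ℝ)) : ℂ) • outer bot)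
                    ((phyb : ℂ) • outer ψ₁ + (((1 - phyb : ℝ)) : ℂ) • outer bot)
            ≤ δ + C * Real.sqrt ν) := by
  classical
  refine ⟨4, by norm_num, ?_⟩
  intro n ψ₀ ψ₁ bot t ν δ pt preal phyb h0 h1 hbb hob0 hob1 ht0 ht1 hν hpt hpreal hphyb hpr hph hFhyp
  set c : ℂ := star ψ₀ ⬝ᵥ ψ₁ with hc
  set F : ℝ := ‖c‖ with hFdef
  have hFnn : 0 ≤ F := norm_nonneg c
  set φ : ℂ := if c = 0 then 1 else c / (F : ℂ) with hφdef
  have hφ : φ * star φ = 1 := by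
    by_cases h : c = 0
    · simp [hφdef, h]
    · have hF0 : F ≠ 0 := by
        rw [hFdef]
        exact norm_ne_zero_iff.mpr h
      have hF0' : (F : ℂ) ≠ 0 := by exact_mod_cast hF0
      have hcc : c * (starRingEnd ℂ) c = ((F^2 : ℝ) : ℂ) := by
        rw [Complex.mul_conj]
        norm_cast
        rw [hFdef, Complex.sq_norm]
      rw [hφdef, if_neg h, Complex.star_def, map_div₀, Complex.conj_ofReal,
        div_mul_div_comm, hcc, ← Complex.ofReal_mul]
      rw [div_eq_one_iff_eq (by exact_mod_cast mul_ne_zero hF0 hF0)]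
      push_cast
      ring
  set v : Fin n → ℂ := star φ • ψ₁ with hvdef
  have hv1 : star v ⬝ᵥ v = 1 := by
    rw [hvdef, star_smul, star_star, smul_dotProduct, dotProduct_smul, h1]
    rw [smul_eq_mul, smul_eq_mul, mul_one]
    exact hφ
  have houter : outer v = outer ψ₁ := by
    ext i j
    simp only [outer, Matrix.vecMulVec_apply, hvdef, Pi.smul_apply, Pi.star_apply,
      smul_eq_mul, Complex.star_def, map_mul, Complex.conj_conj]
    have : (starRingEnd ℂ) φ * φ = 1 := by rw [mul_comm]; simpa [Complex.star_def] using hφ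
    linear_combination (ψ₁ i * (starRingEnd ℂ) (ψ₁ j)) * this
  have huv : star ψ₀ ⬝ᵥ v = (F : ℂ) := by
    rw [hvdef, dotProduct_smul, ← hc, smul_eq_mul]
    by_cases h : c = 0
    · simp [hφdef, h, hFdef]
    · have hF0 : F ≠ 0 := by rw [hFdef]; exact norm_ne_zero_iff.mpr h
      have hF0' : (F : ℂ) ≠ 0 := by exact_mod_cast hF0
      have hcc : (starRingEnd ℂ) c * c = ((F^2 : ℝ) : ℂ) := by
        rw [mul_comm, Complex.mul_conj]
        norm_cast
        rw [hFdef, Complex.sq_norm]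
      rw [hφdef, if_neg h, Complex.star_def, map_div₀, Complex.conj_ofReal, div_mul_eq_mul_div,
        hcc]
      push_cast
      field_simp
  set x : ℝ := 2 * t ^ ((2:ℝ)/3) + ν with hxdef
  have ht23 : (0:ℝ) < t ^ ((2:ℝ)/3) := Real.rpow_pos_of_pos ht0 _
  have ht13 : (0:ℝ) ≤ t ^ ((1:ℝ)/3) := (Real.rpow_pos_of_pos ht0 _).le
  have hx : 0 < x := by rw [hxdef]; positivity
  have hFx : 1 - F ≤ x := by
    rw [hxdef]
    have : 1 - 2 * t ^ ((2:ℝ)/3) - ν ≤ F := hFhyp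
    linarith
  have hsqν : 0 ≤ Real.sqrt ν := Real.sqrt_nonneg ν
  have hsqrt2 : Real.sqrt 2 ≤ 2 := by
    nlinarith [Real.sq_sqrt (by norm_num : (0:ℝ) ≤ 2), Real.sqrt_nonneg 2]
  have hkey : Real.sqrt (2 * x) ≤ 2 * t ^ ((1:ℝ)/3) + Real.sqrt 2 * Real.sqrt ν := by
    have h2x : 2 * x = 4 * t ^ ((2:ℝ)/3) + 2 * ν := by rw [hxdef]; ring
    have hs1 : Real.sqrt (4 * t ^ ((2:ℝ)/3)) = 2 * t ^ ((1:ℝ)/3) := by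
      rw [Real.sqrt_mul (by norm_num : (0:ℝ) ≤ 4)]
      congr 1
      · rw [show (4:ℝ) = 2^2 by norm_num, Real.sqrt_sq (by norm_num : (0:ℝ) ≤ 2)]
      · rw [Real.sqrt_eq_rpow, ← Real.rpow_mul ht0.le]
        norm_num
    have hs2 : Real.sqrt (2 * ν) = Real.sqrt 2 * Real.sqrt ν :=
      Real.sqrt_mul (by norm_num) ν
    calc Real.sqrt (2 * x) = Real.sqrt (4 * t ^ ((2:ℝ)/3) + 2 * ν) := by rw [h2x]
      _ ≤ Real.sqrt (4 * t ^ ((2:ℝ)/3)) + Real.sqrt (2 * ν) :=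
          Stmt11Aux.sqrt_add_le' (by positivity) (by positivity)
      _ = 2 * t ^ ((1:ℝ)/3) + Real.sqrt 2 * Real.sqrt ν := by rw [hs1, hs2]
  have main1 : traceDist ((preal : ℂ) • outer ψ₀ + (((1 - preal : ℝ)) : ℂ) • outer bot)
      ((phyb : ℂ) • outer ψ₁ + (((1 - phyb : ℝ)) : ℂ) • outer bot)
      ≤ 2 * t + 2 * t ^ ((1:ℝ)/3) + 4 * Real.sqrt ν := by
    rcases le_or_gt ν 1 with hν1 | hν1
    · -- small ν : use the given pt
      have hcore := Stmt11Aux.core ψ₀ v bot h0 hv1 hbb F x preal phyb pt huv hx hFx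
        hpreal hphyb hpt
      rw [houter] at hcore
      have htri : |phyb - preal| ≤ |phyb - pt| + |preal - pt| := by
        rw [abs_sub_comm preal pt]
        exact abs_sub_le phyb pt preal
      have hνsq : ν ≤ Real.sqrt ν := by
        nlinarith [Real.sq_sqrt hν, Real.sqrt_le_one.mpr hν1, Real.sqrt_nonneg ν]
      calc traceDist _ _ ≤ (|preal - pt| + |phyb - pt| + |phyb - preal|) / 2
            + Real.sqrt (2 * x) := hcore
        _ ≤ 2 * (t + ν) + (2 * t ^ ((1:ℝ)/3) + Real.sqrt 2 * Real.sqrt ν) := by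
            have := hkey
            linarith
        _ ≤ 2 * t + 2 * t ^ ((1:ℝ)/3) + 4 * Real.sqrt ν := by
            nlinarith [hsqν, hsqrt2, Real.sqrt_nonneg 2]
    · -- large ν
      have hcore := Stmt11Aux.core ψ₀ v bot h0 hv1 hbb F x preal phyb preal huv hx hFx
        hpreal hphyb hpreal
      rw [houter] at hcore
      have h1ν : 1 ≤ Real.sqrt ν := by
        nlinarith [Real.sq_sqrt hν, Real.sqrt_nonneg ν]
      have habs1 : |phyb - preal| ≤ 1 := by
        rw [abs_le]
        constructor <;> [linarith [hphyb.1, hpreal.2]; linarith [hphyb.2, hpreal.1]]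
      calc traceDist _ _ ≤ (|preal - preal| + |phyb - preal| + |phyb - preal|) / 2
            + Real.sqrt (2 * x) := hcore
        _ ≤ 1 + (2 * t ^ ((1:ℝ)/3) + Real.sqrt 2 * Real.sqrt ν) := by
            have := hkey
            rw [sub_self, abs_zero]
            linarith
        _ ≤ 2 * t + 2 * t ^ ((1:ℝ)/3) + 4 * Real.sqrt ν := by
            nlinarith [hsqν, hsqrt2, Real.sqrt_nonneg 2, ht0.le, h1ν]
  refine ⟨main1, ?_⟩
  intro htδ
  have hδ0 : 0 < δ := by nlinarith [sq_nonneg δ]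
  have hδ4 : δ < 4 := by nlinarith [sq_nonneg (δ - 4), sq_nonneg (δ + 4)]
  have ht13v : t ^ ((1:ℝ)/3) = δ / 4 := by
    have htt : t = (δ/4)^(3:ℕ) := by rw [htδ]; ring
    rw [htt, ← Real.rpow_natCast (δ/4) 3, ← Real.rpow_mul (by positivity)]
    norm_num
  have hnum : 2 * t + 2 * t ^ ((1:ℝ)/3) ≤ δ := by
    have hcube : δ^3 ≤ 16 * δ := by
      nlinarith [mul_nonneg (mul_nonneg hδ0.le (by linarith : (0:ℝ) ≤ 4 - δ))
        (by linarith : (0:ℝ) ≤ 4 + δ)]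
    rw [ht13v, htδ]
    linarith
  linarith [main1]
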